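/- arXiv:2209.12350 — 4 statements merged into one kernel-verified Lean document; each statement's English description precedes it below -/
import Mathlib

section
/- (Theorem 1, finite version) Suppose μ_E and μ_θ are probability mass functions on S × A, both inducing joints ρ_i(s,a,s') = μ_i(s,a)P(s'|s,a) with a common strictly positive transition kernel P, with all relevant masses positive. Let J(μ) = (1/(1−γ))·∑_{s,a} μ(s,a)r(s,a) where |r| ≤ R_max and 0 ≤ γ < 1. Then |J(μ_E) − J(μ_θ)| ≤ (√2·R_max/(1−γ))·√(D_χ²(ρ_θ(a|s,s')||ρ_E(a|s,s')) + D_χ²(ρ̄_θ(s,s')||ρ̄_E(s,s'))), where the first term is the χ²-divergence-of-conditionals expression ∑_{s,a,s'} ρ̄_θ(s,s')·(ρ_θ(a|s,s') − ρ_E(a|s,s'))²/ρ_E(a|s,s') aggregated appropriately so that the KL chain-rule bound applies, and ρ̄_i(s,s') = ∑_a ρ_i(s,a,s'). -/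
/-!
Since `|r| ≤ R_max`, the gap in expected reward is at most `R_max/(1-γ)` times the `ℓ¹` distance
of the occupancy measures, and under a shared stochastic kernel this equals the `ℓ¹` distance of
the joints `ρ(s,a,s')`. Writing each joint as marginal times conditional,
`ρ_θ - ρ_E = ρ̄_θ (ρ_θ(a|s,s') - ρ_E(a|s,s')) + ρ_E(a|s,s') (ρ̄_θ - ρ̄_E)`, splits that distance
into a conditional and a marginal part. Cauchy–Schwarz bounds each part by the square root of the
corresponding `χ²`-divergence, and `√x + √y ≤ √2 √(x + y)` merges the two roots.
-/

open Finset Real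

lemma abs_sum_mul_sub_sum_mul_le {ι : Type*} [Fintype ι] (p q r : ι → ℝ) {R : ℝ}
    (hr : ∀ i, |r i| ≤ R) :
    |∑ i, p i * r i - ∑ i, q i * r i| ≤ R * ∑ i, |p i - q i| := by
  rw [← sum_sub_distrib, mul_sum]
  refine (abs_sum_le_sum_abs _ _).trans (sum_le_sum fun i _ => ?_)
  rw [← sub_mul, abs_mul, mul_comm]
  exact mul_le_mul_of_nonneg_right (hr i) (abs_nonneg _)

lemma sum_mul_abs_le_sqrt_sum_mul_sq_div {ι : Type*} [Fintype ι] {w q : ι → ℝ} (d : ι → ℝ)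
    (hw : ∀ i, 0 < w i) (hq : ∀ i, 0 < q i) (hwq : ∑ i, w i * q i = 1) :
    ∑ i, w i * |d i| ≤ √(∑ i, w i * d i ^ 2 / q i) := by
  apply le_sqrt_of_sq_le
  have h := sq_sum_div_le_sum_sq_div univ (fun i => w i * |d i|)
    (fun i _ => mul_pos (hw i) (hq i))
  rw [hwq, div_one] at h
  refine h.trans (le_of_eq (sum_congr rfl fun i _ => ?_))
  rw [mul_pow, sq_abs]
  field_simp [(hw i).ne', (hq i).ne']

lemma sqrt_add_sqrt_le_sqrt_two_mul_sqrt {x y : ℝ} (hx : 0 ≤ x) (hy : 0 ≤ y) :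
    √x + √y ≤ √2 * √(x + y) := by
  rw [← sqrt_mul zero_le_two]
  apply le_sqrt_of_sq_le
  nlinarith [sq_sqrt hx, sq_sqrt hy, sq_nonneg (√x - √y)]

lemma sum_abs_mul_sub_mul_eq {ι : Type*} [Fintype ι] {p : ι → ℝ} (x y : ℝ)
    (hp : ∀ i, 0 ≤ p i) (hp₁ : ∑ i, p i = 1) :
    ∑ i, |x * p i - y * p i| = |x - y| := by
  simp_rw [← sub_mul, abs_mul, abs_of_nonneg (hp _), ← mul_sum, hp₁, mul_one]

lemma abs_sub_le_mul_abs_div_sub_add {x y X Y : ℝ} (hX : 0 < X) (hY : 0 < Y) (hy : 0 ≤ y) :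
    |x - y| ≤ X * |x / X - y / Y| + y / Y * |X - Y| := by
  have hsplit : x - y = X * (x / X - y / Y) + y / Y * (X - Y) := by
    field_simp
    ring
  calc |x - y| ≤ |X * (x / X - y / Y)| + |y / Y * (X - Y)| := hsplit ▸ abs_add_le _ _
    _ = X * |x / X - y / Y| + y / Y * |X - Y| := by
      rw [abs_mul, abs_mul, abs_of_pos hX, abs_of_nonneg (div_nonneg hy hY.le)]

section SharedKernel

variable {S A : Type*} [Fintype A]

/-- `marginal μ P s s'` is `ρ̄(s,s')` for the joint `ρ(s,a,s') = μ(s,a) P(s'|s,a)`. -/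
def marginal (μ : S → A → ℝ) (P : S → A → S → ℝ) (s s' : S) : ℝ :=
  ∑ b, μ s b * P s b s'

/-- `conditional μ P s a s'` is `ρ(a|s,s')`. -/
noncomputable def conditional (μ : S → A → ℝ) (P : S → A → S → ℝ) (s : S) (a : A) (s' : S) : ℝ :=
  μ s a * P s a s' / marginal μ P s s'

variable {μ μE μθ : S → A → ℝ} {P : S → A → S → ℝ}

lemma marginal_pos [Nonempty A] (hμ : ∀ s a, 0 < μ s a) (hP : ∀ s a s', 0 < P s a s')
    (s s' : S) : 0 < marginal μ P s s' :=
  sum_pos (fun b _ => mul_pos (hμ s b) (hP s b s')) univ_nonempty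

lemma conditional_pos [Nonempty A] (hμ : ∀ s a, 0 < μ s a) (hP : ∀ s a s', 0 < P s a s')
    (s : S) (a : A) (s' : S) : 0 < conditional μ P s a s' :=
  div_pos (mul_pos (hμ s a) (hP s a s')) (marginal_pos hμ hP s s')

lemma sum_conditional_eq_one {s s' : S} (h : marginal μ P s s' ≠ 0) :
    ∑ a, conditional μ P s a s' = 1 := by
  unfold conditional
  rw [← sum_div]
  exact div_self h

lemma sum_sum_marginal [Fintype S] (hP : ∀ s a, ∑ s', P s a s' = 1) :
    ∑ s, ∑ s', marginal μ P s s' = ∑ s, ∑ a, μ s a := by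
  refine sum_congr rfl fun s _ => ?_
  unfold marginal
  rw [sum_comm]
  simp_rw [← mul_sum, hP, mul_one]

lemma sum_marginal_mul_abs_conditional_sub_le [Fintype S] [Nonempty A]
    (hP : ∀ s a s', 0 < P s a s') (hP₁ : ∀ s a, ∑ s', P s a s' = 1)
    (hμE : ∀ s a, 0 < μE s a) (hμθ : ∀ s a, 0 < μθ s a) (hμθ₁ : ∑ s, ∑ a, μθ s a = 1) :
    ∑ s, ∑ a, ∑ s', marginal μθ P s s' * |conditional μθ P s a s' - conditional μE P s a s'|
      ≤ √(∑ s, ∑ a, ∑ s', marginal μθ P s s' *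
          (conditional μθ P s a s' - conditional μE P s a s') ^ 2 / conditional μE P s a s') := by
  have hweights : ∑ x : S × A × S,
      marginal μθ P x.1 x.2.2 * conditional μE P x.1 x.2.1 x.2.2 = 1 := by
    simp only [Fintype.sum_prod_type]
    rw [← hμθ₁, ← sum_sum_marginal (μ := μθ) hP₁]
    refine sum_congr rfl fun s _ => ?_
    rw [sum_comm]
    refine sum_congr rfl fun s' _ => ?_
    rw [← mul_sum, sum_conditional_eq_one (marginal_pos hμE hP s s').ne', mul_one]
  simpa only [Fintype.sum_prod_type] using sum_mul_abs_le_sqrt_sum_mul_sq_div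
    (fun x : S × A × S => conditional μθ P x.1 x.2.1 x.2.2 - conditional μE P x.1 x.2.1 x.2.2)
    (fun x => marginal_pos hμθ hP x.1 x.2.2)
    (fun x => conditional_pos hμE hP x.1 x.2.1 x.2.2) hweights

lemma sum_abs_marginal_sub_le [Fintype S] [Nonempty A]
    (hP : ∀ s a s', 0 < P s a s') (hP₁ : ∀ s a, ∑ s', P s a s' = 1)
    (hμE : ∀ s a, 0 < μE s a) (hμE₁ : ∑ s, ∑ a, μE s a = 1) :
    ∑ s, ∑ s', |marginal μθ P s s' - marginal μE P s s'|
      ≤ √(∑ s, ∑ s', (marginal μθ P s s' - marginal μE P s s') ^ 2 / marginal μE P s s') := by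
  have hweights : ∑ x : S × S, 1 * marginal μE P x.1 x.2 = 1 := by
    simp only [one_mul, Fintype.sum_prod_type]
    rw [sum_sum_marginal hP₁, hμE₁]
  simpa only [Fintype.sum_prod_type, one_mul] using sum_mul_abs_le_sqrt_sum_mul_sq_div
    (fun x : S × S => marginal μθ P x.1 x.2 - marginal μE P x.1 x.2)
    (fun _ => one_pos) (fun x => marginal_pos hμE hP x.1 x.2) hweights

lemma sum_abs_sub_le_sqrt_add_sqrt [Fintype S] [Nonempty A]
    (hP : ∀ s a s', 0 < P s a s') (hP₁ : ∀ s a, ∑ s', P s a s' = 1)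
    (hμE : ∀ s a, 0 < μE s a) (hμθ : ∀ s a, 0 < μθ s a)
    (hμE₁ : ∑ s, ∑ a, μE s a = 1) (hμθ₁ : ∑ s, ∑ a, μθ s a = 1) :
    ∑ s, ∑ a, |μθ s a - μE s a|
      ≤ √(∑ s, ∑ a, ∑ s', marginal μθ P s s' *
            (conditional μθ P s a s' - conditional μE P s a s') ^ 2 / conditional μE P s a s')
        + √(∑ s, ∑ s', (marginal μθ P s s' - marginal μE P s s') ^ 2 / marginal μE P s s') := by
  have hsplit : ∀ s a s', |μθ s a * P s a s' - μE s a * P s a s'|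
      ≤ marginal μθ P s s' * |conditional μθ P s a s' - conditional μE P s a s'|
        + conditional μE P s a s' * |marginal μθ P s s' - marginal μE P s s'| := fun s a s' =>
    abs_sub_le_mul_abs_div_sub_add (marginal_pos hμθ hP s s') (marginal_pos hμE hP s s')
      (mul_pos (hμE s a) (hP s a s')).le
  have hcollapse : ∑ s, ∑ a, ∑ s', conditional μE P s a s' *
        |marginal μθ P s s' - marginal μE P s s'|
      = ∑ s, ∑ s', |marginal μθ P s s' - marginal μE P s s'| := by
    refine sum_congr rfl fun s _ => ?_
    rw [sum_comm]
    refine sum_congr rfl fun s' _ => ?_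
    rw [← sum_mul, sum_conditional_eq_one (marginal_pos hμE hP s s').ne', one_mul]
  calc ∑ s, ∑ a, |μθ s a - μE s a|
      = ∑ s, ∑ a, ∑ s', |μθ s a * P s a s' - μE s a * P s a s'| := by
        simp_rw [sum_abs_mul_sub_mul_eq _ _ (fun s' => (hP _ _ s').le) (hP₁ _ _)]
    _ ≤ ∑ s, ∑ a, ∑ s', (marginal μθ P s s' *
            |conditional μθ P s a s' - conditional μE P s a s'|
          + conditional μE P s a s' * |marginal μθ P s s' - marginal μE P s s'|) := by
        gcongr with s _ a _ s' _
        exact hsplit s a s'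
    _ = ∑ s, ∑ a, ∑ s', marginal μθ P s s' *
            |conditional μθ P s a s' - conditional μE P s a s'|
          + ∑ s, ∑ s', |marginal μθ P s s' - marginal μE P s s'| := by
        simp only [sum_add_distrib, hcollapse]
    _ ≤ _ := add_le_add (sum_marginal_mul_abs_conditional_sub_le hP hP₁ hμE hμθ hμθ₁)
        (sum_abs_marginal_sub_le hP hP₁ hμE hμE₁)

lemma sum_abs_sub_le_sqrt_two_mul_sqrt [Fintype S] [Nonempty A]
    (hP : ∀ s a s', 0 < P s a s') (hP₁ : ∀ s a, ∑ s', P s a s' = 1)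
    (hμE : ∀ s a, 0 < μE s a) (hμθ : ∀ s a, 0 < μθ s a)
    (hμE₁ : ∑ s, ∑ a, μE s a = 1) (hμθ₁ : ∑ s, ∑ a, μθ s a = 1) :
    ∑ s, ∑ a, |μθ s a - μE s a|
      ≤ √2 * √((∑ s, ∑ a, ∑ s', marginal μθ P s s' *
            (conditional μθ P s a s' - conditional μE P s a s') ^ 2 / conditional μE P s a s')
        + ∑ s, ∑ s', (marginal μθ P s s' - marginal μE P s s') ^ 2 / marginal μE P s s') := by
  refine (sum_abs_sub_le_sqrt_add_sqrt hP hP₁ hμE hμθ hμE₁ hμθ₁).trans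
    (sqrt_add_sqrt_le_sqrt_two_mul_sqrt ?_ ?_) <;> refine sum_nonneg fun s _ => ?_
  · exact sum_nonneg fun a _ => sum_nonneg fun s' _ => div_nonneg
      (mul_nonneg (marginal_pos hμθ hP s s').le (sq_nonneg _)) (conditional_pos hμE hP s a s').le
  · exact sum_nonneg fun s' _ => div_nonneg (sq_nonneg _) (marginal_pos hμE hP s s').le

end SharedKernel

theorem theorem_one_finite_general {S A : Type*} [Fintype S] [Fintype A]
    (P : S → A → S → ℝ) (μE μθ : S → A → ℝ) (r : S → A → ℝ) (Rmax γ : ℝ)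
    (hPpos : ∀ s a s', 0 < P s a s') (hPsum : ∀ s a, ∑ s', P s a s' = 1)
    (hμEpos : ∀ s a, 0 < μE s a) (hμθpos : ∀ s a, 0 < μθ s a)
    (hμEsum : ∑ s, ∑ a, μE s a = 1) (hμθsum : ∑ s, ∑ a, μθ s a = 1)
    (hr : ∀ s a, |r s a| ≤ Rmax) (hγ1 : γ < 1) :
    |(1 / (1 - γ)) * (∑ s, ∑ a, μE s a * r s a)
        - (1 / (1 - γ)) * (∑ s, ∑ a, μθ s a * r s a)|
      ≤ (Real.sqrt 2 * Rmax / (1 - γ)) *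
        Real.sqrt
          ((∑ s, ∑ a, ∑ s', (∑ b, μθ s b * P s b s') *
              ((μθ s a * P s a s' / ∑ b, μθ s b * P s b s')
                - (μE s a * P s a s' / ∑ b, μE s b * P s b s')) ^ 2
              / (μE s a * P s a s' / ∑ b, μE s b * P s b s'))
          + ∑ s, ∑ s', ((∑ b, μθ s b * P s b s') - ∑ b, μE s b * P s b s') ^ 2
              / ∑ b, μE s b * P s b s') := by
  obtain ⟨s₀, a₀⟩ : Nonempty (S × A) := by
    by_contra hempty
    simp [not_nonempty_iff.mp hempty, ← Fintype.sum_prod_type'] at hμEsum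
  have hR : 0 ≤ Rmax := (abs_nonneg _).trans (hr s₀ a₀)
  have hreward : |∑ s, ∑ a, μθ s a * r s a - ∑ s, ∑ a, μE s a * r s a|
      ≤ Rmax * ∑ s, ∑ a, |μθ s a - μE s a| := by
    simpa only [Fintype.sum_prod_type] using abs_sum_mul_sub_sum_mul_le
      (fun x : S × A => μθ x.1 x.2) (fun x => μE x.1 x.2) (fun x => r x.1 x.2)
      (fun x => hr x.1 x.2)
  change _ ≤ _ * √((∑ s, ∑ a, ∑ s', marginal μθ P s s' *
      (conditional μθ P s a s' - conditional μE P s a s') ^ 2 / conditional μE P s a s')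
    + ∑ s, ∑ s', (marginal μθ P s s' - marginal μE P s s') ^ 2 / marginal μE P s s')
  have : Nonempty A := ⟨a₀⟩
  have hγ : 0 < 1 - γ := sub_pos.mpr hγ1
  rw [← mul_sub, abs_mul, abs_of_pos (one_div_pos.mpr hγ), abs_sub_comm]
  calc 1 / (1 - γ) * |∑ s, ∑ a, μθ s a * r s a - ∑ s, ∑ a, μE s a * r s a|
      ≤ 1 / (1 - γ) * (Rmax * (√2 * √(_ + _))) := by
        gcongr
        exact hreward.trans (mul_le_mul_of_nonneg_left
          (sum_abs_sub_le_sqrt_two_mul_sqrt hPpos hPsum hμEpos hμθpos hμEsum hμθsum) hR)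
    _ = _ := by ring

theorem theorem_one_finite {S A : Type*} [Fintype S] [Fintype A]
    (P : S → A → S → ℝ) (μE μθ : S → A → ℝ) (r : S → A → ℝ) (Rmax γ : ℝ)
    (hPpos : ∀ s a s', 0 < P s a s') (hPsum : ∀ s a, ∑ s', P s a s' = 1)
    (hμEpos : ∀ s a, 0 < μE s a) (hμθpos : ∀ s a, 0 < μθ s a)
    (hμEsum : ∑ s, ∑ a, μE s a = 1) (hμθsum : ∑ s, ∑ a, μθ s a = 1)
    (hr : ∀ s a, |r s a| ≤ Rmax) (hγ0 : 0 ≤ γ) (hγ1 : γ < 1) :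
    |(1 / (1 - γ)) * (∑ s, ∑ a, μE s a * r s a)
        - (1 / (1 - γ)) * (∑ s, ∑ a, μθ s a * r s a)|
      ≤ (Real.sqrt 2 * Rmax / (1 - γ)) *
        Real.sqrt
          ((∑ s, ∑ a, ∑ s', (∑ b, μθ s b * P s b s') *
              ((μθ s a * P s a s' / ∑ b, μθ s b * P s b s')
                - (μE s a * P s a s' / ∑ b, μE s b * P s b s')) ^ 2
              / (μE s a * P s a s' / ∑ b, μE s b * P s b s'))
          + ∑ s, ∑ s', ((∑ b, μθ s b * P s b s') - ∑ b, μE s b * P s b s') ^ 2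
              / ∑ b, μE s b * P s b s') :=
  theorem_one_finite_general P μE μθ r Rmax γ hPpos hPsum hμEpos hμθpos hμEsum hμθsum hr hγ1
end

section
/- If the transition kernel is deterministic/injective in the action, i.e. for each (s,s') there is at most one action a with P(s'|s,a) > 0, then the conditional distributions ρ_θ(·|s,s') and ρ_E(·|s,s') coincide wherever both marginals are positive, hence D_KL(ρ_θ(a|s,s')||ρ_E(a|s,s')) = 0 and consequently D_KL of the (s,s')-marginals equals D_KL of the (s,a)-marginals. -/
/-!
Injectivity means that, for each pair `(s, s')`, at most one action `a` has `P s a s' > 0`, so the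
marginal `∑ b, μ s b * P s b s'` reduces to the single term `μ s a * P s a s'`. Hence the conditional
of `a` given `(s, s')` is the point mass at that action whatever `μ` is, and the `(s, s')`-marginal
log-ratio is `log (μ₁ s a / μ₂ s a)` once the common factor `P s a s'` cancels; summing out `s'`
with `∑ s', P s a s' = 1` gives the `(s, a)`-divergence.
-/

open Finset Real

theorem mul_log_div_self_div_div_self (x y : ℝ) : x * log (x / x / (y / y)) = 0 := by
  rcases eq_or_ne x 0 with rfl | hx
  · simp
  rcases eq_or_ne y 0 with rfl | hy
  · simp
  simp [hx, hy]

section InjectiveKernel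

variable {S A : Type*} [Fintype A] {P : S → A → S → ℝ}

theorem sum_mul_kernel_eq_of_pos (hPnonneg : ∀ s a s', 0 ≤ P s a s')
    (hinj : ∀ s s' a a', 0 < P s a s' → 0 < P s a' s' → a = a') (μ : S → A → ℝ)
    {s : S} {a : A} {s' : S} (hP : 0 < P s a s') :
    ∑ b, μ s b * P s b s' = μ s a * P s a s' := by
  refine sum_eq_single a (fun b _ hb => ?_) (fun h => (h (mem_univ a)).elim)
  have hPb : P s b s' = 0 :=
    ((hPnonneg s b s').eq_of_not_lt fun h => hb (hinj s s' b a h hP)).symm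
  rw [hPb, mul_zero]

theorem conditional_kl_term_eq_zero (hPnonneg : ∀ s a s', 0 ≤ P s a s')
    (hinj : ∀ s s' a a', 0 < P s a s' → 0 < P s a' s' → a = a') (μ₁ μ₂ : S → A → ℝ)
    (s : S) (a : A) (s' : S) :
    (μ₁ s a * P s a s') * log ((μ₁ s a * P s a s' / ∑ b, μ₁ s b * P s b s')
      / (μ₂ s a * P s a s' / ∑ b, μ₂ s b * P s b s')) = 0 := by
  rcases (hPnonneg s a s').eq_or_lt with hP | hP
  · rw [← hP, mul_zero, zero_mul]
  rw [sum_mul_kernel_eq_of_pos hPnonneg hinj μ₁ hP, sum_mul_kernel_eq_of_pos hPnonneg hinj μ₂ hP]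
  exact mul_log_div_self_div_div_self _ _

theorem marginal_mul_log_div_eq_sum (hPnonneg : ∀ s a s', 0 ≤ P s a s')
    (hinj : ∀ s s' a a', 0 < P s a s' → 0 < P s a' s' → a = a') (μ₁ μ₂ : S → A → ℝ)
    (s s' : S) :
    (∑ b, μ₁ s b * P s b s') * log ((∑ b, μ₁ s b * P s b s') / ∑ b, μ₂ s b * P s b s')
      = ∑ a, μ₁ s a * P s a s' * log (μ₁ s a / μ₂ s a) := by
  rw [sum_mul]
  refine sum_congr rfl fun a _ => ?_
  rcases (hPnonneg s a s').eq_or_lt with hP | hP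
  · rw [← hP, mul_zero, zero_mul, zero_mul]
  rw [sum_mul_kernel_eq_of_pos hPnonneg hinj μ₁ hP, sum_mul_kernel_eq_of_pos hPnonneg hinj μ₂ hP,
    mul_div_mul_right _ _ hP.ne']

theorem sum_marginal_mul_log_div_eq [Fintype S] (hPnonneg : ∀ s a s', 0 ≤ P s a s')
    (hPsum : ∀ s a, ∑ s', P s a s' = 1)
    (hinj : ∀ s s' a a', 0 < P s a s' → 0 < P s a' s' → a = a') (μ₁ μ₂ : S → A → ℝ) (s : S) :
    ∑ s', (∑ b, μ₁ s b * P s b s') * log ((∑ b, μ₁ s b * P s b s') / ∑ b, μ₂ s b * P s b s')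
      = ∑ a, μ₁ s a * log (μ₁ s a / μ₂ s a) := by
  simp_rw [marginal_mul_log_div_eq_sum hPnonneg hinj μ₁ μ₂ s]
  rw [sum_comm]
  refine sum_congr rfl fun a _ => ?_
  calc ∑ s', μ₁ s a * P s a s' * log (μ₁ s a / μ₂ s a)
      = μ₁ s a * log (μ₁ s a / μ₂ s a) * ∑ s', P s a s' := by
        rw [mul_sum]; exact sum_congr rfl fun s' _ => by ring
    _ = μ₁ s a * log (μ₁ s a / μ₂ s a) := by rw [hPsum, mul_one]

end InjectiveKernel

theorem injective_kernel_kl_cond_zero_general {S A : Type*} [Fintype S] [Fintype A]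
    (P : S → A → S → ℝ) (μ₁ μ₂ : S → A → ℝ)
    (hPnonneg : ∀ s a s', 0 ≤ P s a s')
    (hPsum : ∀ s a, ∑ s', P s a s' = 1)
    (hinj : ∀ s s' a a', 0 < P s a s' → 0 < P s a' s' → a = a') :
    (∑ s, ∑ a, ∑ s', (μ₁ s a * P s a s') *
        Real.log ((μ₁ s a * P s a s' / ∑ b, μ₁ s b * P s b s')
          / (μ₂ s a * P s a s' / ∑ b, μ₂ s b * P s b s')) = 0)
    ∧ (∑ s, ∑ s', (∑ b, μ₁ s b * P s b s') *
          Real.log ((∑ b, μ₁ s b * P s b s') / (∑ b, μ₂ s b * P s b s'))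
        = ∑ s, ∑ a, μ₁ s a * Real.log (μ₁ s a / μ₂ s a)) :=
  ⟨sum_eq_zero fun s _ => sum_eq_zero fun a _ => sum_eq_zero fun s' _ =>
      conditional_kl_term_eq_zero hPnonneg hinj μ₁ μ₂ s a s',
    sum_congr rfl fun s _ => sum_marginal_mul_log_div_eq hPnonneg hPsum hinj μ₁ μ₂ s⟩

theorem injective_kernel_kl_cond_zero {S A : Type*} [Fintype S] [Fintype A]
    (P : S → A → S → ℝ) (μ₁ μ₂ : S → A → ℝ)
    (hPnonneg : ∀ s a s', 0 ≤ P s a s')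
    (hPsum : ∀ s a, ∑ s', P s a s' = 1)
    (hinj : ∀ s s' a a', 0 < P s a s' → 0 < P s a' s' → a = a')
    (hμ₁pos : ∀ s a, 0 < μ₁ s a) (hμ₂pos : ∀ s a, 0 < μ₂ s a)
    (hμ₁sum : ∑ s, ∑ a, μ₁ s a = 1) (hμ₂sum : ∑ s, ∑ a, μ₂ s a = 1) :
    (∑ s, ∑ a, ∑ s', (μ₁ s a * P s a s') *
        Real.log ((μ₁ s a * P s a s' / ∑ b, μ₁ s b * P s b s')
          / (μ₂ s a * P s a s' / ∑ b, μ₂ s b * P s b s')) = 0)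
    ∧ (∑ s, ∑ s', (∑ b, μ₁ s b * P s b s') *
          Real.log ((∑ b, μ₁ s b * P s b s') / (∑ b, μ₂ s b * P s b s'))
        = ∑ s, ∑ a, μ₁ s a * Real.log (μ₁ s a / μ₂ s a)) :=
  injective_kernel_kl_cond_zero_general P μ₁ μ₂ hPnonneg hPsum hinj
end

section
/- (LSGAN generator objective equals a chi-squared divergence) Let p, q : X → ℝ>0 be probability mass functions on a finite set X, and let D*(x) = (b·q(x) + a·p(x))/(q(x) + p(x)) be the optimal discriminator. Define 2C = ∑_x q(x)(D*(x) − c)² + ∑_x p(x)(D*(x) − c)². If b − c = 1 and b − a = 2, then 2C = D_χ²(2p || p + q) = ∑_x (2p(x) − (p(x)+q(x)))²/(p(x)+q(x)). -/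
/-! With `a = b - 2` and `c = b - 1` the optimal discriminator satisfies
`D*(x) - c = (q(x) - p(x)) / (q(x) + p(x))`, so the two weighted squares add up to
`(q(x) - p(x))² / (q(x) + p(x))`, which is the chi-squared summand since `2p - (p + q) = p - q`. -/

section

variable {K : Type*} [Field K]

theorem lsgan_optimal_discriminator_sub {p q a b c : K} (hqp : q + p ≠ 0)
    (hbc : b - c = 1) (hba : b - a = 2) :
    (b * q + a * p) / (q + p) - c = (q - p) / (q + p) := by
  obtain rfl : c = b - 1 := by linear_combination -hbc
  obtain rfl : a = b - 2 := by linear_combination -hba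
  field_simp
  ring

theorem lsgan_generator_term_eq_chiSq_term {p q a b c : K} (hqp : q + p ≠ 0)
    (hbc : b - c = 1) (hba : b - a = 2) :
    q * ((b * q + a * p) / (q + p) - c) ^ 2 + p * ((b * q + a * p) / (q + p) - c) ^ 2
      = (2 * p - (p + q)) ^ 2 / (p + q) := by
  rw [lsgan_optimal_discriminator_sub hqp hbc hba, ← add_mul, add_comm p q]
  field_simp
  ring

end

theorem lsgan_generator_chiSq_general {X : Type*} [Fintype X] (p q : X → ℝ) (a b c : ℝ)
    (hp : ∀ x, 0 < p x) (hq : ∀ x, 0 < q x)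
    (hbc : b - c = 1) (hba : b - a = 2) :
    (∑ x, q x * ((b * q x + a * p x) / (q x + p x) - c) ^ 2)
      + ∑ x, p x * ((b * q x + a * p x) / (q x + p x) - c) ^ 2
    = ∑ x, (2 * p x - (p x + q x)) ^ 2 / (p x + q x) := by
  rw [← Finset.sum_add_distrib]
  refine Finset.sum_congr rfl fun x _ => ?_
  exact lsgan_generator_term_eq_chiSq_term (add_pos (hq x) (hp x)).ne' hbc hba

theorem lsgan_generator_chiSq {X : Type*} [Fintype X] (p q : X → ℝ) (a b c : ℝ)
    (hp : ∀ x, 0 < p x) (hq : ∀ x, 0 < q x)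
    (hpsum : ∑ x, p x = 1) (hqsum : ∑ x, q x = 1)
    (hbc : b - c = 1) (hba : b - a = 2) :
    (∑ x, q x * ((b * q x + a * p x) / (q x + p x) - c) ^ 2)
      + ∑ x, p x * ((b * q x + a * p x) / (q x + p x) - c) ^ 2
    = ∑ x, (2 * p x - (p x + q x)) ^ 2 / (p x + q x) :=
  lsgan_generator_chiSq_general p q a b c hp hq hbc hba
end

section
/- (Composite divergence bound used in Theorem 1) For strictly positive joint pmfs ρ_1, ρ_2 on a finite set Y = S × A × S with marginals ρ̄_i on S × S and conditionals ρ_i(a|s,s'), the total variation between the (s,a)-marginals μ_1, μ_2 (when ρ_i(s,a,s') = μ_i(s,a)P(s'|s,a) for a common kernel P) satisfies 2·D_TV(μ_1,μ_2)² ≤ E_{ρ_1}[log(ρ_1(a|s,s')/ρ_2(a|s,s'))] + D_KL(ρ̄_1||ρ̄_2). -/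
/-!
By the chain rule over the pair `(s, s')`, the right-hand side is `D_KL(ρ₁ ‖ ρ₂)`; since
`ρᵢ = μᵢ P` with a common kernel, `P` cancels in `log (ρ₁ / ρ₂)` and sums out, leaving
`D_KL(μ₁ ‖ μ₂)`. What remains is Pinsker's inequality for `μ₁, μ₂`. It follows from the pointwise
bound `3 (x - 1)² / (2 (x + 2)) ≤ x log x - x + 1` at `x = p / q`, weighted by `q`, together with
Cauchy–Schwarz in the form `(∑ |p - q|)² ≤ (∑ (p - q)² / (p + 2 q)) · ∑ (p + 2 q)`, where
`∑ (p + 2 q) = 3`.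
-/

open Real Finset

theorem le_of_hasDerivAt_of_sub_mul_deriv_nonneg {f f' : ℝ → ℝ} {a c x : ℝ}
    (hf : ∀ y, a < y → HasDerivAt f (f' y) y) (hsign : ∀ y, a < y → 0 ≤ (y - c) * f' y)
    (hc : a < c) (hx : a < x) : f c ≤ f x := by
  have hcont : ContinuousOn f (Set.Ioi a) := fun y hy =>
    (hf y hy).continuousAt.continuousWithinAt
  rcases le_total c x with hcx | hxc
  · refine monotoneOn_of_hasDerivWithinAt_nonneg (f' := f') (convex_Icc c x)
      (hcont.mono fun y hy => hc.trans_le hy.1) (fun y hy => ?_) (fun y hy => ?_)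
      (Set.left_mem_Icc.2 hcx) (Set.right_mem_Icc.2 hcx) hcx
    all_goals rw [interior_Icc] at hy
    · exact (hf y (hc.trans hy.1)).hasDerivWithinAt
    · exact nonneg_of_mul_nonneg_right (hsign y (hc.trans hy.1)) (sub_pos.2 hy.1)
  · refine antitoneOn_of_hasDerivWithinAt_nonpos (f' := f') (convex_Icc x c)
      (hcont.mono fun y hy => hx.trans_le hy.1) (fun y hy => ?_) (fun y hy => ?_)
      (Set.left_mem_Icc.2 hxc) (Set.right_mem_Icc.2 hxc) hxc
    all_goals rw [interior_Icc] at hy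
    · exact (hf y (hx.trans hy.1)).hasDerivWithinAt
    · exact nonpos_of_mul_nonneg_right (hsign y (hx.trans hy.1)) (sub_neg.2 hy.2)

theorem hasDerivAt_log_sub_div {x : ℝ} (hx : 0 < x) :
    HasDerivAt (fun y => log y - 3 * (y - 1) * (y + 5) / (2 * (y + 2) ^ 2))
      (x⁻¹ - 27 / (x + 2) ^ 3) x := by
  have hnum : HasDerivAt (fun y : ℝ => 3 * (y - 1) * (y + 5))
      (3 * 1 * (x + 5) + 3 * (x - 1) * 1) x :=
    (((hasDerivAt_id' x).sub_const 1).const_mul 3).mul ((hasDerivAt_id' x).add_const 5)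
  have hden : HasDerivAt (fun y : ℝ => 2 * (y + 2) ^ 2) (2 * ((2 : ℕ) * (x + 2) ^ 1 * 1)) x :=
    (((hasDerivAt_id' x).add_const 2).pow 2).const_mul 2
  refine ((hasDerivAt_log hx.ne').sub (hnum.div hden (by positivity))).congr_deriv ?_
  field_simp
  ring

theorem monotoneOn_log_sub_div :
    MonotoneOn (fun y => log y - 3 * (y - 1) * (y + 5) / (2 * (y + 2) ^ 2)) (Set.Ioi 0) := by
  refine monotoneOn_of_hasDerivWithinAt_nonneg (f' := fun y => y⁻¹ - 27 / (y + 2) ^ 3)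
    (convex_Ioi 0) (fun y hy => (hasDerivAt_log_sub_div hy).continuousAt.continuousWithinAt)
    (fun y hy => ?_) (fun y hy => ?_) <;> rw [interior_Ioi] at hy
  · exact (hasDerivAt_log_sub_div hy).hasDerivWithinAt
  · have hy : (0 : ℝ) < y := hy
    -- `(y + 2) ^ 3 - 27 y = (y - 1) ^ 2 (y + 8)`
    rw [sub_nonneg, div_le_iff₀ (by positivity), inv_mul_eq_div, le_div_iff₀ hy]
    nlinarith [mul_nonneg (sq_nonneg (y - 1)) (by linarith : (0 : ℝ) ≤ y + 8)]

theorem sub_one_mul_log_sub_div_nonneg {x : ℝ} (hx : 0 < x) :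
    0 ≤ (x - 1) * (log x - 3 * (x - 1) * (x + 5) / (2 * (x + 2) ^ 2)) := by
  rcases le_total 1 x with h | h
  · have := monotoneOn_log_sub_div (Set.mem_Ioi.2 one_pos) (Set.mem_Ioi.2 hx) h
    norm_num at this
    exact mul_nonneg (sub_nonneg.2 h) (sub_nonneg.2 this)
  · have := monotoneOn_log_sub_div (Set.mem_Ioi.2 hx) (Set.mem_Ioi.2 one_pos) h
    norm_num at this
    exact mul_nonneg_of_nonpos_of_nonpos (sub_nonpos.2 h) (sub_nonpos.2 this)

theorem three_mul_sq_div_le_mul_log {x : ℝ} (hx : 0 < x) :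
    3 * (x - 1) ^ 2 / (2 * (x + 2)) ≤ x * log x - x + 1 := by
  have hg : ∀ y, 0 < y →
      HasDerivAt (fun y => y * log y - y + 1 - 3 * (y - 1) ^ 2 / (2 * (y + 2)))
        (log y - 3 * (y - 1) * (y + 5) / (2 * (y + 2) ^ 2)) y := by
    intro y hy
    have hnum : HasDerivAt (fun y : ℝ => 3 * (y - 1) ^ 2) (3 * ((2 : ℕ) * (y - 1) ^ 1 * 1)) y :=
      (((hasDerivAt_id' y).sub_const 1).pow 2).const_mul 3
    have hden : HasDerivAt (fun y : ℝ => 2 * (y + 2)) (2 * 1) y :=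
      ((hasDerivAt_id' y).add_const 2).const_mul 2
    refine ((((hasDerivAt_mul_log hy.ne').sub (hasDerivAt_id' y)).add_const 1).sub
      (hnum.div hden (by positivity))).congr_deriv ?_
    field_simp
    ring
  have := le_of_hasDerivAt_of_sub_mul_deriv_nonneg hg
    (fun y hy => sub_one_mul_log_sub_div_nonneg hy) one_pos hx
  norm_num at this
  linarith

theorem three_halves_mul_sq_div_le_mul_log_div {p q : ℝ} (hp : 0 < p) (hq : 0 < q) :
    3 / 2 * ((p - q) ^ 2 / (p + 2 * q)) ≤ p * log (p / q) - p + q := by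
  have h := mul_le_mul_of_nonneg_left (three_mul_sq_div_le_mul_log (div_pos hp hq)) hq.le
  have hlhs :
      3 / 2 * ((p - q) ^ 2 / (p + 2 * q)) = q * (3 * (p / q - 1) ^ 2 / (2 * (p / q + 2))) := by
    field_simp
  have hrhs : p * log (p / q) - p + q = q * (p / q * log (p / q) - p / q + 1) := by
    field_simp
  rwa [hlhs, hrhs]

theorem two_mul_sq_half_sum_abs_sub_le_sum_mul_log_div {ι : Type*} [Fintype ι] {p q : ι → ℝ}
    (hp : ∀ i, 0 < p i) (hq : ∀ i, 0 < q i) (hp1 : ∑ i, p i = 1) (hq1 : ∑ i, q i = 1) :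
    2 * ((1 / 2) * ∑ i, |p i - q i|) ^ 2 ≤ ∑ i, p i * log (p i / q i) := by
  have hweight : ∑ i, (p i + 2 * q i) = 3 := by
    rw [sum_add_distrib, ← mul_sum, hp1, hq1]; norm_num
  have hcs := sq_sum_div_le_sum_sq_div univ (fun i => |p i - q i|)
    (g := fun i => p i + 2 * q i) fun i _ => by linarith [hp i, hq i]
  simp only [hweight, sq_abs] at hcs
  have hpoint := sum_le_sum fun i (_ : i ∈ univ) =>
    three_halves_mul_sq_div_le_mul_log_div (hp i) (hq i)
  rw [sum_add_distrib, sum_sub_distrib, hp1, hq1, ← mul_sum] at hpoint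
  linarith

theorem sum_mul_log_div_div_add_sum_mul_log_div_sum {ι : Type*} [Fintype ι] {r₁ r₂ : ι → ℝ}
    (h₁ : ∀ i, 0 < r₁ i) (h₂ : ∀ i, 0 < r₂ i) :
    ∑ i, r₁ i * log ((r₁ i / ∑ j, r₁ j) / (r₂ i / ∑ j, r₂ j))
        + (∑ j, r₁ j) * log ((∑ j, r₁ j) / ∑ j, r₂ j)
      = ∑ i, r₁ i * log (r₁ i / r₂ i) := by
  rcases isEmpty_or_nonempty ι with hι | hι
  · simp
  have hm₁ : 0 < ∑ j, r₁ j := sum_pos (fun i _ => h₁ i) univ_nonempty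
  have hm₂ : 0 < ∑ j, r₂ j := sum_pos (fun i _ => h₂ i) univ_nonempty
  have hsplit : ∀ i, log ((r₁ i / ∑ j, r₁ j) / (r₂ i / ∑ j, r₂ j))
      = log (r₁ i / r₂ i) - log ((∑ j, r₁ j) / ∑ j, r₂ j) := fun i => by
    rw [div_div_div_comm, log_div (div_pos (h₁ i) (h₂ i)).ne' (div_pos hm₁ hm₂).ne']
  simp only [hsplit, mul_sub, sum_sub_distrib, ← sum_mul]
  ring

theorem sum_mul_mul_log_div_mul_of_sum_eq_one {ι : Type*} [Fintype ι] {P : ι → ℝ}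
    (hP : ∑ i, P i = 1) (m₁ m₂ : ℝ) :
    ∑ i, m₁ * P i * log (m₁ * P i / (m₂ * P i)) = m₁ * log (m₁ / m₂) := by
  have hcancel : ∀ i, m₁ * P i * log (m₁ * P i / (m₂ * P i)) = m₁ * log (m₁ / m₂) * P i :=
    fun i => by
      rcases eq_or_ne (P i) 0 with h | h
      · simp [h]
      · rw [mul_div_mul_right _ _ h]
        ring
  rw [sum_congr rfl fun i _ => hcancel i, ← mul_sum, hP, mul_one]

theorem composite_divergence_bound {S A : Type*} [Fintype S] [Fintype A]
    (P : S → A → S → ℝ) (μ₁ μ₂ : S → A → ℝ)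
    (hPpos : ∀ s a s', 0 < P s a s') (hPsum : ∀ s a, ∑ s', P s a s' = 1)
    (hμ₁pos : ∀ s a, 0 < μ₁ s a) (hμ₂pos : ∀ s a, 0 < μ₂ s a)
    (hμ₁sum : ∑ s, ∑ a, μ₁ s a = 1) (hμ₂sum : ∑ s, ∑ a, μ₂ s a = 1) :
    2 * ((1 / 2) * ∑ s, ∑ a, |μ₁ s a - μ₂ s a|) ^ 2
      ≤ (∑ s, ∑ a, ∑ s', (μ₁ s a * P s a s') *
            Real.log ((μ₁ s a * P s a s' / ∑ b, μ₁ s b * P s b s')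
              / (μ₂ s a * P s a s' / ∑ b, μ₂ s b * P s b s')))
        + ∑ s, ∑ s', (∑ b, μ₁ s b * P s b s') *
            Real.log ((∑ b, μ₁ s b * P s b s') / (∑ b, μ₂ s b * P s b s')) := by
  calc 2 * ((1 / 2) * ∑ s, ∑ a, |μ₁ s a - μ₂ s a|) ^ 2
      ≤ ∑ s, ∑ a, μ₁ s a * log (μ₁ s a / μ₂ s a) := by
        simpa only [Fintype.sum_prod_type] using
          two_mul_sq_half_sum_abs_sub_le_sum_mul_log_div (ι := S × A)
            (p := fun x => μ₁ x.1 x.2) (q := fun x => μ₂ x.1 x.2)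
            (fun x => hμ₁pos _ _) (fun x => hμ₂pos _ _)
            (by rwa [Fintype.sum_prod_type]) (by rwa [Fintype.sum_prod_type])
    _ = ∑ s, ∑ s', ∑ a, μ₁ s a * P s a s' * log (μ₁ s a * P s a s' / (μ₂ s a * P s a s')) := by
        refine sum_congr rfl fun s _ => ?_
        rw [sum_comm]
        exact sum_congr rfl fun a _ =>
          (sum_mul_mul_log_div_mul_of_sum_eq_one (hPsum s a) _ _).symm
    _ = ∑ s, ∑ s', ((∑ a, (μ₁ s a * P s a s') *
            log ((μ₁ s a * P s a s' / ∑ b, μ₁ s b * P s b s')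
              / (μ₂ s a * P s a s' / ∑ b, μ₂ s b * P s b s')))
          + (∑ b, μ₁ s b * P s b s') *
            log ((∑ b, μ₁ s b * P s b s') / (∑ b, μ₂ s b * P s b s'))) :=
        sum_congr rfl fun s _ => sum_congr rfl fun s' _ =>
          (sum_mul_log_div_div_add_sum_mul_log_div_sum
            (fun a => mul_pos (hμ₁pos s a) (hPpos s a s'))
            (fun a => mul_pos (hμ₂pos s a) (hPpos s a s'))).symm
    _ = _ := by
        rw [← sum_add_distrib]
        refine sum_congr rfl fun s _ => ?_
        rw [sum_add_distrib, sum_comm]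
end
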